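/- arXiv:2605.30154 — 2 statements merged into one kernel-verified Lean document; each statement's English description precedes it below -/
import Mathlib

section
/- For real γ ≥ 0 and integers N ≥ 1 and p ∈ (0,1], the polynomial w_{γ,N}(p) = Σ_{m=0}^{N−1} [(γ)_m / m!] (1−p)^m satisfies w_{γ,N}(p) = Σ_{j=0}^{N−1} β_j · C(N−1,j) p^j (1−p)^{N−1−j}, where β_j = Γ(N+γ)Γ(j+1) / (Γ(N)Γ(j+1+γ)). -/
open Polynomial Finset

lemma asc_step (m : ℕ) (a : ℝ) :
    (ascPochhammer ℝ (m+1)).eval (a+1)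
      = (ascPochhammer ℝ (m+1)).eval a + (m+1) * (ascPochhammer ℝ m).eval (a+1) := by
  have h1 : (ascPochhammer ℝ (m+1)).eval a = a * (ascPochhammer ℝ m).eval (a+1) := by
    rw [ascPochhammer_succ_left]; simp [eval_comp]
  have h2 : (ascPochhammer ℝ (m+1)).eval (a+1) = (ascPochhammer ℝ m).eval (a+1) * (a+1+m) := by
    rw [ascPochhammer_succ_right]; simp
  rw [h1, h2]; ring

lemma key (γ p q : ℝ) (h : p + q = 1) : ∀ N, 1 ≤ N →
    ∑ m ∈ range N, (ascPochhammer ℝ m).eval γ / m.factorial * q ^ m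
      = ∑ m ∈ range N, (ascPochhammer ℝ m).eval (γ + N - m) / m.factorial
          * p ^ (N - 1 - m) * q ^ m := by
  intro N
  induction N with
  | zero => omega
  | succ n ih =>
    intro _
    rcases Nat.eq_zero_or_pos n with rfl | hn
    · simp
    have ihn := ih hn
    set Sn := ∑ m ∈ range n, (ascPochhammer ℝ m).eval (γ + n - m) / m.factorial
          * p ^ (n - 1 - m) * q ^ m with hSn
    have step : ∀ m ∈ range (n+1),
        (ascPochhammer ℝ m).eval (γ + (n+1:ℕ) - m) / m.factorial * p ^ ((n+1) - 1 - m) * q ^ m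
        = (ascPochhammer ℝ m).eval (γ + (n:ℕ) - m) / m.factorial * p ^ (n - m) * q ^ m
          + (m:ℝ) * (ascPochhammer ℝ (m-1)).eval (γ + (n+1:ℕ) - m) / m.factorial * p ^ (n - m) * q ^ m := by
      intro m hm
      rcases Nat.eq_zero_or_pos m with rfl | hmpos
      · simp
      obtain ⟨k, rfl⟩ := Nat.exists_eq_add_of_le hmpos
      have e1 : (n+1) - 1 - (1+k) = n - (1+k) := by omega
      have e2 : (1+k) - 1 = k := by omega
      rw [e1, e2]
      push_cast
      rw [show γ + ((n:ℝ)+1) - (1+(k:ℝ)) = (γ + n - (1+k)) + 1 from by ring,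
        show (1:ℕ)+k = k+1 from by omega, asc_step k (γ + n - (1+k))]
      have hf : ((k+1).factorial : ℝ) ≠ 0 := by positivity
      push_cast
      field_simp
      ring
    rw [Finset.sum_congr rfl step, Finset.sum_add_distrib]
    have hA : ∑ m ∈ range (n+1),
        (ascPochhammer ℝ m).eval (γ + (n:ℕ) - m) / m.factorial * p ^ (n - m) * q ^ m
        = p * Sn + (ascPochhammer ℝ n).eval γ / n.factorial * q ^ n := by
      rw [Finset.sum_range_succ]
      congr 1
      · rw [hSn, Finset.mul_sum]
        refine Finset.sum_congr rfl fun m hm => ?_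
        have hm' : m < n := Finset.mem_range.mp hm
        rw [show n - m = (n-1-m) + 1 from by omega, pow_succ]
        ring
      · simp
    have hB : ∑ m ∈ range (n+1),
        (m:ℝ) * (ascPochhammer ℝ (m-1)).eval (γ + (n+1:ℕ) - m) / m.factorial * p ^ (n - m) * q ^ m
        = q * Sn := by
      rw [Finset.sum_range_succ', hSn, Finset.mul_sum]
      have : ∀ i ∈ range n,
          ((i+1:ℕ):ℝ) * (ascPochhammer ℝ ((i+1)-1)).eval (γ + (n+1:ℕ) - (i+1:ℕ)) / (i+1).factorial
            * p ^ (n - (i+1)) * q ^ (i+1)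
          = q * ((ascPochhammer ℝ i).eval (γ + n - i) / i.factorial * p ^ (n - 1 - i) * q ^ i) := by
        intro i hi
        have hi' : i < n := Finset.mem_range.mp hi
        have e2 : n - (i+1) = n - 1 - i := by omega
        rw [show (i+1) - 1 = i from rfl, e2]
        push_cast
        rw [show γ + ((n:ℝ)+1) - ((i:ℝ)+1) = γ + n - i from by ring]
        have hf : ((i+1).factorial : ℝ) ≠ 0 := by positivity
        rw [pow_succ, Nat.factorial_succ]
        push_cast
        field_simp
      rw [Finset.sum_congr rfl this]
      simp
    rw [hA, hB, Finset.sum_range_succ, ihn]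
    linear_combination (-Sn) * h
lemma gamma_poch (x : ℝ) (hx : 0 < x) (n : ℕ) :
    Real.Gamma (x + n) = Real.Gamma x * (ascPochhammer ℝ n).eval x := by
  induction n with
  | zero => simp
  | succ k ih =>
    rw [ascPochhammer_succ_right]
    have hxk : (x + k) ≠ 0 := by positivity
    push_cast
    rw [show x + ((k:ℝ) + 1) = (x + k) + 1 from by ring, Real.Gamma_add_one hxk, ih]
    simp [eval_mul]
    ring

/-- Bernstein expansion of the truncated RL2ML weight:
`w_{γ,N}(p) = Σ_j β_j C(N-1,j) p^j (1-p)^{N-1-j}` with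
`β_j = Γ(N+γ)Γ(j+1)/(Γ(N)Γ(j+1+γ))`. -/
theorem rl2ml_weight_bernstein (γ : ℝ) (hγ : 0 ≤ γ) (N : ℕ) (hN : 1 ≤ N)
    (p : ℝ) (hp0 : 0 < p) (hp1 : p ≤ 1) :
    ∑ m ∈ Finset.range N,
        (Polynomial.eval γ (ascPochhammer ℝ m)) / (m.factorial : ℝ) * (1 - p) ^ m
      = ∑ j ∈ Finset.range N,
          (Real.Gamma (N + γ) * Real.Gamma (j + 1) /
              (Real.Gamma N * Real.Gamma (j + 1 + γ))) *
            ((N - 1).choose j : ℝ) * p ^ j * (1 - p) ^ (N - 1 - j) := by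
  obtain ⟨n, rfl⟩ : ∃ n, N = n + 1 := ⟨N - 1, by omega⟩
  rw [key γ p (1-p) (by ring) (n+1) (by omega)]
  rw [← Finset.sum_range_reflect
    (fun j => (Real.Gamma ((n+1:ℕ) + γ) * Real.Gamma (j + 1) /
              (Real.Gamma (n+1:ℕ) * Real.Gamma (j + 1 + γ))) *
            (((n+1) - 1).choose j : ℝ) * p ^ j * (1 - p) ^ ((n+1) - 1 - j)) (n+1)]
  refine Finset.sum_congr rfl fun m hm => ?_
  have hm' : m ≤ n := by simpa using Nat.lt_succ_iff.mp (Finset.mem_range.mp hm)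

  set j := n + 1 - 1 - m with hj
  have hjm : j + m = n := by omega
  have hx : (0:ℝ) < (j:ℝ) + 1 + γ := by positivity
  have e2 : γ + ((n+1:ℕ):ℝ) - (m:ℝ) = (j:ℝ) + 1 + γ := by
    have : (j:ℝ) = (n:ℝ) - m := by
      rw [hj, show n + 1 - 1 = n from rfl, Nat.cast_sub hm']
    rw [this]; push_cast; ring
  have e1 : ((n+1:ℕ):ℝ) + γ = ((j:ℝ) + 1 + γ) + m := by
    have : (j:ℝ) + m = n := by exact_mod_cast congrArg (Nat.cast : ℕ → ℝ) hjm
    push_cast; linarith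
  have e3 : (n+1) - 1 - j = m := by omega
  have e4 : (n+1) - 1 - m = j := rfl
  rw [e2, e1, gamma_poch _ hx]
  have hΓj : Real.Gamma ((j:ℝ) + 1 + γ) ≠ 0 :=
    ne_of_gt (Real.Gamma_pos_of_pos hx)
  have hΓj1 : Real.Gamma ((j:ℝ) + 1) = (j.factorial : ℝ) :=
    Real.Gamma_nat_eq_factorial j
  have hΓn : Real.Gamma ((n+1:ℕ):ℝ) = (n.factorial : ℝ) := by
    push_cast; exact Real.Gamma_nat_eq_factorial n
  rw [hΓj1, hΓn]
  simp only [Nat.add_sub_cancel]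
  rw [show n - j = m from by omega]
  have hch : (n.choose j : ℝ) = (n.factorial : ℝ) / (j.factorial * m.factorial) := by
    rw [Nat.cast_choose ℝ (by omega : j ≤ n)]
    congr 2
    rw [show n - j = m from by omega]
  rw [hch]
  have h1 : (m.factorial : ℝ) ≠ 0 := by positivity
  have h2 : (j.factorial : ℝ) ≠ 0 := by positivity
  have h3 : (n.factorial : ℝ) ≠ 0 := by positivity
  field_simp
end

section
/- Let (r₁,S₁),…,(r_N,S_N) be i.i.d. pairs where rᵢ ∈ {0,1} with P(rᵢ=1) = p ∈ (0,1] and Sᵢ is a real-valued (or ℝ^d-valued) random variable, and let K = Σᵢ rᵢ. For any f: {1,…,N} → ℝ, with the estimator ĝ = f(K)·Σᵢ rᵢSᵢ (set to 0 when K = 0), one has E[ĝ] = (Σ_{m=0}^{N−1} N f(m+1) C(N−1,m) p^m (1−p)^{N−1−m}) · E[r₁S₁]. -/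
/-!
Because `rᵢ ∈ {0,1}`, the summand `f(K) rᵢ Sᵢ` equals `f(Kᵢ + 1) rᵢ Sᵢ`, where `Kᵢ` counts the
successes among the other indices. `Kᵢ` is a function of the other pairs, hence independent of
`rᵢ Sᵢ`, and it is binomial: splitting according to the exact set `A ⊆ J` of successes, each such
event has probability `p ^ #A * (1 - p) ^ (#J - #A)` by independence. The `N` summands then have
the same expectation.
-/

open MeasureTheory ProbabilityTheory Finset

lemma mul_sum_eq_sum_comp_card_erase_mul {ι : Type*} [Fintype ι] [DecidableEq ι] (r s : ι → ℝ)
    (hr : ∀ i, r i = 0 ∨ r i = 1) (f : ℕ → ℝ) :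
    f #{i | r i = 1} * ∑ i, r i * s i
      = ∑ i, f (#{j ∈ univ.erase i | r j = 1} + 1) * (r i * s i) := by
  rw [mul_sum]
  refine sum_congr rfl fun i _ => ?_
  rcases hr i with hi | hi
  · simp [hi]
  · rw [filter_erase, card_erase_add_one (by simpa using hi)]

lemma prod_ite_mem_of_subset {ι M : Type*} [CommMonoid M] [DecidableEq ι] {J A : Finset ι}
    (hAJ : A ⊆ J) (a b : M) :
    ∏ j ∈ J, (if j ∈ A then a else b) = a ^ #A * b ^ (#J - #A) := by
  rw [prod_ite, prod_const, prod_const, filter_mem_eq_inter, inter_eq_right.2 hAJ,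
    filter_notMem_eq_sdiff, card_sdiff_of_subset hAJ]

section Counting

variable {Ω ι β : Type*} {X : ι → Ω → β} {P : β → Prop}

section
variable [DecidablePred P]

lemma setOf_filter_eq_eq_biInter {J A : Finset ι} (hAJ : A ⊆ J) :
    {ω | {j ∈ J | P (X j ω)} = A} = ⋂ j ∈ J, {ω | P (X j ω) ↔ j ∈ A} := by
  ext ω
  simp only [Set.mem_ofPred_eq, Set.mem_iInter, Finset.ext_iff, mem_filter]
  exact ⟨fun h j hj => by simpa [hj] using h j,
    fun h j => ⟨fun hj => (h j hj.1).1 hj.2, fun hj => ⟨hAJ hj, (h j (hAJ hj)).2 hj⟩⟩⟩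

lemma comp_card_filter_eq_sum_indicator (J : Finset ι) (g : ℕ → ℝ) (ω : Ω) :
    g #{j ∈ J | P (X j ω)}
      = ∑ A ∈ J.powerset, {ω | {j ∈ J | P (X j ω)} = A}.indicator (fun _ => g #A) ω := by
  classical
  simp only [Set.indicator_apply, Set.mem_ofPred_eq]
  rw [sum_ite_eq, if_pos (mem_powerset.2 (filter_subset _ _))]

end

variable [MeasurableSpace Ω] {μ : Measure Ω} [MeasurableSpace β]

lemma measureReal_setOf_iff [IsProbabilityMeasure μ] {p : ℝ} (hp0 : 0 ≤ p) (hP : Measurable P)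
    {j : ι} (hXj : Measurable (X j)) (hp : μ {ω | P (X j ω)} = ENNReal.ofReal p)
    (q : Prop) [Decidable q] :
    μ.real {ω | P (X j ω) ↔ q} = if q then p else 1 - p := by
  have hpj : μ.real {ω | P (X j ω)} = p := by
    rw [measureReal_def, hp, ENNReal.toReal_ofReal hp0]
  split_ifs with hq
  · simpa [hq] using hpj
  · simpa [hq, ← hpj, Set.compl_ofPred] using
      measureReal_compl (μ := μ) (hXj (measurableSet_setOfPred.2 hP))

variable [DecidablePred P]

lemma ProbabilityTheory.iIndepFun.indepFun_card_filter_erase [Fintype ι] [DecidableEq ι]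
    (hX : iIndepFun X μ) (hXm : ∀ j, Measurable (X j)) (hP : Measurable P) (i : ι) :
    IndepFun (fun ω => #{j ∈ univ.erase i | P (X j ω)}) (X i) μ := by
  have hdisj : Disjoint (univ.erase i) {i} := disjoint_singleton_right.2 (notMem_erase i _)
  have hcount : Measurable fun v : univ.erase i → β => #{j | P (v j)} := by
    simp_rw [card_filter]
    exact measurable_sum _ fun j _ =>
      Measurable.ite (measurableSet_setOfPred.2 (hP.comp (measurable_pi_apply j)))
        measurable_const measurable_const
  convert (hX.indepFun_finset _ _ hdisj hXm).comp hcount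
    (measurable_pi_apply ⟨i, mem_singleton_self i⟩) using 1
  · ext ω
    simp only [Function.comp_apply, card_filter]
    exact (sum_coe_sort (univ.erase i) fun j => if P (X j ω) then 1 else 0).symm
  · rfl

lemma measurableSet_setOf_filter_eq (hXm : ∀ j, Measurable (X j)) (hP : Measurable P)
    {J A : Finset ι} (hAJ : A ⊆ J) :
    MeasurableSet {ω | {j ∈ J | P (X j ω)} = A} := by
  classical
  rw [setOf_filter_eq_eq_biInter hAJ]
  exact .biInter J.countable_toSet fun j _ =>
    hXm j (measurableSet_setOfPred.2 (hP.iff measurable_const))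

lemma integrable_comp_card_filter [IsFiniteMeasure μ] (hXm : ∀ j, Measurable (X j))
    (hP : Measurable P) (J : Finset ι) (g : ℕ → ℝ) :
    Integrable (fun ω => g #{j ∈ J | P (X j ω)}) μ := by
  simp_rw [comp_card_filter_eq_sum_indicator J g]
  exact integrable_finsetSum _ fun A hA =>
    (integrable_const _).indicator (measurableSet_setOf_filter_eq hXm hP (mem_powerset.1 hA))

variable [IsProbabilityMeasure μ]

lemma measureReal_setOf_filter_eq (hX : iIndepFun X μ) (hXm : ∀ j, Measurable (X j))
    (hP : Measurable P) {p : ℝ} (hp0 : 0 ≤ p) (hp : ∀ j, μ {ω | P (X j ω)} = ENNReal.ofReal p)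
    {J A : Finset ι} (hAJ : A ⊆ J) :
    μ.real {ω | {j ∈ J | P (X j ω)} = A} = p ^ #A * (1 - p) ^ (#J - #A) := by
  classical
  have hprod := hX.meas_biInter (S := J) (s := fun j => {ω | P (X j ω) ↔ j ∈ A})
    fun j _ => ⟨_, measurableSet_setOfPred.2 (hP.iff measurable_const), rfl⟩
  rw [setOf_filter_eq_eq_biInter hAJ, measureReal_def, hprod, ENNReal.toReal_prod]
  simp only [← measureReal_def, measureReal_setOf_iff hp0 hP (hXm _) (hp _)]
  exact prod_ite_mem_of_subset hAJ _ _

lemma integral_comp_card_filter (hX : iIndepFun X μ) (hXm : ∀ j, Measurable (X j))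
    (hP : Measurable P) {p : ℝ} (hp0 : 0 ≤ p) (hp : ∀ j, μ {ω | P (X j ω)} = ENNReal.ofReal p)
    (J : Finset ι) (g : ℕ → ℝ) :
    ∫ ω, g #{j ∈ J | P (X j ω)} ∂μ
      = ∑ m ∈ range (#J + 1), g m * (#J).choose m * p ^ m * (1 - p) ^ (#J - m) := by
  calc ∫ ω, g #{j ∈ J | P (X j ω)} ∂μ
      = ∑ A ∈ J.powerset, g #A * (p ^ #A * (1 - p) ^ (#J - #A)) := by
        simp_rw [comp_card_filter_eq_sum_indicator J g]
        rw [integral_finsetSum _ fun A hA =>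
          (integrable_const _).indicator (measurableSet_setOf_filter_eq hXm hP (mem_powerset.1 hA))]
        refine sum_congr rfl fun A hA => ?_
        rw [integral_indicator_const _ (measurableSet_setOf_filter_eq hXm hP (mem_powerset.1 hA)),
          measureReal_setOf_filter_eq hX hXm hP hp0 hp (mem_powerset.1 hA), smul_eq_mul, mul_comm]
    _ = _ := by
        rw [sum_powerset_apply_card (fun m => g m * (p ^ m * (1 - p) ^ (#J - m)))]
        refine sum_congr rfl fun m _ => ?_
        rw [nsmul_eq_mul]
        ring

end Counting

theorem bernstein_representation_general (N : ℕ) (hN : 0 < N) (p : ℝ) (hp0 : 0 < p)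
    {Ω : Type*} [MeasurableSpace Ω] (μ : Measure Ω) [IsProbabilityMeasure μ]
    (r S : Fin N → Ω → ℝ)
    (hrmeas : ∀ i, Measurable (r i)) (hSmeas : ∀ i, Measurable (S i))
    (hr01 : ∀ i ω, r i ω = 0 ∨ r i ω = 1)
    (hp : ∀ i, μ {ω | r i ω = 1} = ENNReal.ofReal p)
    (hiid : iIndepFun (fun i ω => (r i ω, S i ω)) μ)
    (hident : ∀ i, IdentDistrib (fun ω => (r i ω, S i ω))
        (fun ω => (r ⟨0, hN⟩ ω, S ⟨0, hN⟩ ω)) μ μ)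
    (f : ℕ → ℝ)
    (hint0 : Integrable (fun ω => r ⟨0, hN⟩ ω * S ⟨0, hN⟩ ω) μ) :
    ∫ ω, f (Finset.univ.filter (fun i => r i ω = 1)).card * ∑ i, r i ω * S i ω ∂μ
      = (∑ m ∈ Finset.range N,
            (N : ℝ) * f (m + 1) * ((N - 1).choose m : ℝ) * p ^ m * (1 - p) ^ (N - 1 - m))
        * ∫ ω, r ⟨0, hN⟩ ω * S ⟨0, hN⟩ ω ∂μ := by
  have hXm : ∀ i, Measurable fun ω => (r i ω, S i ω) := fun i => (hrmeas i).prodMk (hSmeas i)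
  have hP : Measurable fun b : ℝ × ℝ => b.1 = 1 :=
    measurableSet_setOfPred.1 (measurable_fst (measurableSet_singleton 1))
  have hrS : ∀ i, IdentDistrib (fun ω => r i ω * S i ω)
      (fun ω => r ⟨0, hN⟩ ω * S ⟨0, hN⟩ ω) μ μ :=
    fun i => (hident i).comp (measurable_fst.mul measurable_snd)
  have hind : ∀ i, IndepFun (fun ω => f (#{j ∈ univ.erase i | r j ω = 1} + 1))
      (fun ω => r i ω * S i ω) μ := fun i =>
    (hiid.indepFun_card_filter_erase hXm hP i).comp (measurable_of_countable fun n => f (n + 1))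
      (measurable_fst.mul measurable_snd)
  have hfK : ∀ i, Integrable (fun ω => f (#{j ∈ univ.erase i | r j ω = 1} + 1)) μ := fun i =>
    integrable_comp_card_filter hXm hP _ fun n => f (n + 1)
  have hrSint : ∀ i, Integrable (fun ω => r i ω * S i ω) μ := fun i =>
    (hrS i).integrable_iff.2 hint0
  have hsummand : ∀ i, ∫ ω, f (#{j ∈ univ.erase i | r j ω = 1} + 1) * (r i ω * S i ω) ∂μ
      = (∑ m ∈ range N, f (m + 1) * (N - 1).choose m * p ^ m * (1 - p) ^ (N - 1 - m))
        * ∫ ω, r ⟨0, hN⟩ ω * S ⟨0, hN⟩ ω ∂μ := fun i => by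
    rw [(hind i).integral_fun_mul_eq_mul_integral (hfK i).1 (hrSint i).1, (hrS i).integral_eq,
      integral_comp_card_filter hiid hXm hP hp0.le hp _ fun n => f (n + 1),
      card_erase_of_mem (mem_univ i), card_fin, Nat.sub_add_cancel hN]
  calc ∫ ω, f #{i | r i ω = 1} * ∑ i, r i ω * S i ω ∂μ
      = ∑ i, ∫ ω, f (#{j ∈ univ.erase i | r j ω = 1} + 1) * (r i ω * S i ω) ∂μ := by
        simp_rw [mul_sum_eq_sum_comp_card_erase_mul _ _ (hr01 · _) f]
        exact integral_finsetSum _ fun i _ => (hind i).integrable_mul (hfK i) (hrSint i)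
    _ = _ := by
        rw [sum_congr rfl fun i _ => hsummand i, sum_const, card_univ, Fintype.card_fin,
          nsmul_eq_mul, ← mul_assoc, mul_sum]
        congr 1
        exact sum_congr rfl fun m _ => by ring

/-- Bernstein representation of K-only estimators: for i.i.d. pairs `(rᵢ,Sᵢ)` with
`rᵢ ∈ {0,1}`, `P(rᵢ = 1) = p`, and `K = Σᵢ rᵢ`, the estimator `ĝ = f(K)·Σᵢ rᵢSᵢ`
(zero when `K = 0`, ensured by `f 0 = 0` being irrelevant since the sum vanishes)
satisfies `E[ĝ] = (Σ_m N f(m+1) C(N-1,m) p^m (1-p)^{N-1-m})·E[r₁S₁]`. -/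
theorem bernstein_representation (N : ℕ) (hN : 0 < N) (p : ℝ) (hp0 : 0 < p) (hp1 : p ≤ 1)
    {Ω : Type*} [MeasurableSpace Ω] (μ : Measure Ω) [IsProbabilityMeasure μ]
    (r S : Fin N → Ω → ℝ)
    (hrmeas : ∀ i, Measurable (r i)) (hSmeas : ∀ i, Measurable (S i))
    (hr01 : ∀ i ω, r i ω = 0 ∨ r i ω = 1)
    (hp : ∀ i, μ {ω | r i ω = 1} = ENNReal.ofReal p)
    (hiid : iIndepFun (fun i ω => (r i ω, S i ω)) μ)
    (hident : ∀ i, IdentDistrib (fun ω => (r i ω, S i ω))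
        (fun ω => (r ⟨0, hN⟩ ω, S ⟨0, hN⟩ ω)) μ μ)
    (f : ℕ → ℝ)
    (hint : Integrable (fun ω =>
        f (Finset.univ.filter (fun i => r i ω = 1)).card * ∑ i, r i ω * S i ω) μ)
    (hint0 : Integrable (fun ω => r ⟨0, hN⟩ ω * S ⟨0, hN⟩ ω) μ) :
    ∫ ω, f (Finset.univ.filter (fun i => r i ω = 1)).card * ∑ i, r i ω * S i ω ∂μ
      = (∑ m ∈ Finset.range N,
            (N : ℝ) * f (m + 1) * ((N - 1).choose m : ℝ) * p ^ m * (1 - p) ^ (N - 1 - m))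
        * ∫ ω, r ⟨0, hN⟩ ω * S ⟨0, hN⟩ ω ∂μ :=
  bernstein_representation_general N hN p hp0 μ r S hrmeas hSmeas hr01 hp hiid hident f hint0
end
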